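/- Let v be a vertex of a tree T of order n ≥ 3 minimizing ww_T, with neighbors v₁, …, v_l and corresponding components T₁, …, T_l of T − v of orders n₁, …, n_l. Then for each i, Σ_{y∈V(T)∖V(T_i)} d_T(v,y) + n − n_i ≥ Σ_{x∈V(T_i)} d_T(v,x). -/

import Mathlib

/-!
Let `w` be a neighbour of `v` and `S` the branch of `T - v` containing `w`. In a tree,
`d(w, x) = d(v, x) - 1` for `x ∈ S` and `d(w, x) = d(v, x) + 1` otherwise. Since
`(d + 1)² + (d + 1) = d² + d + 2(d + 1)`, moving from `v` to `w` changes `ww` by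
`2 (Σ_{x ∉ S} (d(v, x) + 1) - Σ_{x ∈ S} d(v, x))`, which is nonnegative by minimality of `ww T v`.
-/

open Finset
open scoped Classical

/-- Local hyper-Wiener function: `ww G v = Σ_u (d(u,v)² + d(u,v))`. -/
noncomputable def ww {V : Type*} [Fintype V] (G : SimpleGraph V) (v : V) : ℕ :=
  ∑ u : V, ((G.dist u v) ^ 2 + G.dist u v)

namespace SimpleGraph

variable {V : Type*} {G : SimpleGraph V} {u v w x : V}

lemma Walk.notMem_support_of_forall_not_adj (p : G.Walk u w) (hu : u ≠ v)
    (hv : ∀ a, ¬ G.Adj a v) : v ∉ p.support :=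
  fun h => hv _ ((p.takeUntil v h).adj_penultimate (Walk.not_nil_of_ne hu))

lemma Walk.reachable_deleteEdges_incidenceSet (p : G.Walk u w) (hv : v ∉ p.support) :
    (G.deleteEdges (G.incidenceSet v)).Reachable u w := by
  by_contra h
  obtain ⟨e, hev, hep⟩ := p.exists_mem_edges_of_not_reachable_deleteEdges h
  induction e using Sym2.ind with
  | _ a b =>
    rcases Sym2.mem_iff.1 hev.2 with rfl | rfl
    · exact hv (p.fst_mem_support_of_mem_edges hep)
    · exact hv (p.snd_mem_support_of_mem_edges hep)

lemma not_adj_deleteEdges_incidenceSet (v a : V) :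
    ¬ (G.deleteEdges (G.incidenceSet v)).Adj a v := by
  rw [deleteEdges_adj]
  exact fun h => h.2 ((mk'_mem_incidenceSet_right_iff G).2 h.1)

lemma IsAcyclic.length_eq_dist_of_isPath (hG : G.IsAcyclic) {p : G.Walk u w} (hp : p.IsPath) :
    p.length = G.dist u w := by
  obtain ⟨q, hq, hqd⟩ := p.reachable.exists_path_of_dist
  rw [← hqd]
  exact congrArg (fun r : G.Path u w => r.1.length)
    ((hG.subsingleton_path u w).elim ⟨p, hp⟩ ⟨q, hq⟩)

/-- A shortest path from `w` to `x` cannot pass through `v` when `v` is farther from `x`. -/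
lemma reachable_deleteEdges_incidenceSet_of_dist_eq (hwx : G.Reachable w x)
    (hd : G.dist v x = G.dist w x + 1) : (G.deleteEdges (G.incidenceSet v)).Reachable w x := by
  obtain ⟨p, -, hp⟩ := hwx.exists_path_of_dist
  refine p.reachable_deleteEdges_incidenceSet fun hv => ?_
  have := (dist_le (p.dropUntil v hv)).trans (p.length_dropUntil_le_length hv)
  omega

lemma IsTree.dist_eq_dist_add_one_of_reachable_deleteEdges_incidenceSet (hG : G.IsTree)
    (hadj : G.Adj v w) (hx : (G.deleteEdges (G.incidenceSet v)).Reachable w x) :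
    G.dist v x = G.dist w x + 1 := by
  obtain ⟨p, hp⟩ := hx.exists_isPath
  have hv : v ∉ p.support :=
    p.notMem_support_of_forall_not_adj hadj.ne' (not_adj_deleteEdges_incidenceSet v)
  set q : G.Walk w x := p.mapLe (deleteEdges_le _)
  have hq : q.IsPath := hp.mapLe _
  have hvq : v ∉ q.support := by rwa [Walk.support_mapLe_eq_support]
  have := hG.isAcyclic.length_eq_dist_of_isPath (hq.cons hvq (h := hadj))
  rw [Walk.length_cons, hG.isAcyclic.length_eq_dist_of_isPath hq] at this
  exact this.symm

lemma IsTree.dist_eq_dist_add_one_of_not_reachable_deleteEdges_incidenceSet (hG : G.IsTree)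
    (hadj : G.Adj v w) (hx : ¬ (G.deleteEdges (G.incidenceSet v)).Reachable w x) :
    G.dist w x = G.dist v x + 1 := by
  have hdich := hG.dist_eq_dist_add_one_of_adj x hadj
  rw [dist_comm (u := x), dist_comm (u := x)] at hdich
  exact hdich.resolve_left
    (mt (reachable_deleteEdges_incidenceSet_of_dist_eq (hG.connected w x)) hx)

end SimpleGraph

lemma ww_eq_sum_dist {V : Type*} [Fintype V] (G : SimpleGraph V) (v : V) :
    ww G v = ∑ u, (G.dist v u ^ 2 + G.dist v u) := by
  simp only [ww, SimpleGraph.dist_comm]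

lemma sum_le_sum_compl_add_card_of_sum_sq_add_le {ι : Type*} [Fintype ι] [DecidableEq ι]
    (S : Finset ι) {a b : ι → ℕ} (hS : ∀ i ∈ S, a i = b i + 1) (hSc : ∀ i ∈ Sᶜ, b i = a i + 1)
    (h : ∑ i, (a i ^ 2 + a i) ≤ ∑ i, (b i ^ 2 + b i)) :
    ∑ i ∈ S, a i ≤ ∑ i ∈ Sᶜ, a i + #Sᶜ := by
  have hSum : ∑ i ∈ S, (a i ^ 2 + a i) = ∑ i ∈ S, (b i ^ 2 + b i) + 2 * ∑ i ∈ S, a i := by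
    rw [mul_sum, ← sum_add_distrib]
    refine sum_congr rfl fun i hi => ?_
    rw [hS i hi]; ring
  have hSumc : ∑ i ∈ Sᶜ, (b i ^ 2 + b i)
      = ∑ i ∈ Sᶜ, (a i ^ 2 + a i) + 2 * (∑ i ∈ Sᶜ, a i + #Sᶜ) := by
    rw [card_eq_sum_ones, ← sum_add_distrib, mul_sum, ← sum_add_distrib]
    refine sum_congr rfl fun i hi => ?_
    rw [hSc i hi]; ring
  rw [← sum_add_sum_compl S, ← sum_add_sum_compl S (fun i => b i ^ 2 + b i), hSum, hSumc] at h
  omega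

theorem stmt11_general {V : Type*} [Fintype V] (T : SimpleGraph V) (hT : T.IsTree)
    (v : V) (hv : ∀ x, ww T v ≤ ww T x) :
    ∀ vi : V, T.Adj v vi →
      (∑ y ∈ (Finset.univ.filter
          (fun y => (T.deleteEdges (T.incidenceSet v)).Reachable vi y))ᶜ, T.dist v y)
        + (Fintype.card V
            - (Finset.univ.filter
                (fun y => (T.deleteEdges (T.incidenceSet v)).Reachable vi y)).card)
      ≥ ∑ x ∈ Finset.univ.filter
          (fun x => (T.deleteEdges (T.incidenceSet v)).Reachable vi x), T.dist v x := by
  intro vi hadj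
  set S := univ.filter fun y => (T.deleteEdges (T.incidenceSet v)).Reachable vi y
  have hS : ∀ x ∈ S, T.dist v x = T.dist vi x + 1 := fun x hx =>
    hT.dist_eq_dist_add_one_of_reachable_deleteEdges_incidenceSet hadj (mem_filter.1 hx).2
  have hSc : ∀ x ∈ Sᶜ, T.dist vi x = T.dist v x + 1 := fun x hx =>
    hT.dist_eq_dist_add_one_of_not_reachable_deleteEdges_incidenceSet hadj (by simpa [S] using hx)
  have := sum_le_sum_compl_add_card_of_sum_sq_add_le S hS hSc
    (by simpa only [ww_eq_sum_dist] using hv vi)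
  rwa [card_compl] at this

theorem stmt11 {V : Type*} [Fintype V] (T : SimpleGraph V) (hT : T.IsTree)
    (hn : 3 ≤ Fintype.card V) (v : V) (hv : ∀ x, ww T v ≤ ww T x) :
    ∀ vi : V, T.Adj v vi →
      (∑ y ∈ (Finset.univ.filter
          (fun y => (T.deleteEdges (T.incidenceSet v)).Reachable vi y))ᶜ, T.dist v y)
        + (Fintype.card V
            - (Finset.univ.filter
                (fun y => (T.deleteEdges (T.incidenceSet v)).Reachable vi y)).card)
      ≥ ∑ x ∈ Finset.univ.filter
          (fun x => (T.deleteEdges (T.incidenceSet v)).Reachable vi x), T.dist v x :=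
  stmt11_general T hT v hv
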